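/- Let R be a field of characteristic zero, n ≥ 3, and let φ = Λ ∘ σ^m ∘ ψ_D ∘ Δ be an automorphism of UT_n(R), where Λ is a central automorphism, σ is the flip automorphism, m ∈ {0,1}, ψ_D is a diagonal automorphism, and Δ is a ring automorphism. If R(φ) < ∞, then all central elements of UT_n(R) (i.e. all matrices T_{1,n}(a) = I_n + a·E_{1,n}, a ∈ R) are pairwise φ-conjugate. -/

import Mathlib

open Matrix

/-- `x` and `y` are twisted conjugate with respect to the automorphism `φ`,
i.e. `x = z * y * (φ z)⁻¹` for some `z`. -/
def TwistedConj {G : Type*} [Group G] (φ : G ≃* G) (x y : G) : Prop :=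
  ∃ z : G, x = z * y * (φ z)⁻¹

/-- The Reidemeister number of an automorphism: the number of twisted conjugacy classes,
as an element of `ℕ∞ = ℕ ∪ {∞}` (`⊤` meaning infinitely many classes). -/
noncomputable def reidemeisterNumber {G : Type*} [Group G] (φ : G ≃* G) : ℕ∞ :=
  Cardinal.toENat (Cardinal.mk (Quot (TwistedConj φ)))

/-- A matrix is (upper) unitriangular if it has `1` on the diagonal and `0` below it. -/
def Matrix.IsUnitriangular {n : ℕ} {R : Type*} [CommRing R]
    (M : Matrix (Fin n) (Fin n) R) : Prop :=
  (∀ i, M i i = 1) ∧ ∀ ⦃i j : Fin n⦄, j < i → M i j = 0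

namespace Matrix.IsUnitriangular

variable {n : ℕ} {R : Type*} [CommRing R] {M N : Matrix (Fin n) (Fin n) R}

theorem blockTriangular (h : M.IsUnitriangular) : M.BlockTriangular (id : Fin n → Fin n) :=
  fun _ _ hij => h.2 hij

theorem one : (1 : Matrix (Fin n) (Fin n) R).IsUnitriangular :=
  ⟨fun i => by simp, fun i j hij => by simp [Matrix.one_apply, (ne_of_lt hij).symm]⟩

theorem diag_mul (hM : M.IsUnitriangular) (hN : N.BlockTriangular (id : Fin n → Fin n))
    (i : Fin n) : (M * N) i i = N i i := by
  rw [Matrix.mul_apply, Finset.sum_eq_single i]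
  · rw [hM.1 i, one_mul]
  · intro k _ hk
    rcases lt_or_gt_of_ne hk with hlt | hgt
    · rw [hM.2 hlt, zero_mul]
    · rw [hN (show (id i : Fin n) < id k from hgt), mul_zero]
  · intro h; exact absurd (Finset.mem_univ i) h

theorem mul (hM : M.IsUnitriangular) (hN : N.IsUnitriangular) : (M * N).IsUnitriangular := by
  constructor
  · intro i
    rw [hM.diag_mul hN.blockTriangular i, hN.1 i]
  · intro i j hij
    rw [Matrix.mul_apply]
    refine Finset.sum_eq_zero fun k _ => ?_
    rcases lt_or_ge k i with hk | hk
    · rw [hM.2 hk, zero_mul]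
    · rw [hN.2 (lt_of_lt_of_le hij hk), mul_zero]

end Matrix.IsUnitriangular

/-- The group `UT n R` of upper unitriangular `n × n` matrices over `R`, realized as a
subgroup of the group of units of the matrix ring. -/
def UT (n : ℕ) (R : Type*) [CommRing R] : Subgroup (Matrix (Fin n) (Fin n) R)ˣ where
  carrier := {u | Matrix.IsUnitriangular (u : Matrix (Fin n) (Fin n) R)}
  one_mem' := by simpa using Matrix.IsUnitriangular.one
  mul_mem' := by
    intro a b ha hb
    simpa using ha.mul hb
  inv_mem' := by
    intro u hu
    have hdet : IsUnit ((u : Matrix (Fin n) (Fin n) R)).det :=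
      (Matrix.isUnit_iff_isUnit_det _).mp u.isUnit
    haveI : Invertible (u : Matrix (Fin n) (Fin n) R) := u.invertible
    have htri : ((u : Matrix (Fin n) (Fin n) R)⁻¹).BlockTriangular (id : Fin n → Fin n) :=
      Matrix.blockTriangular_inv_of_blockTriangular hu.blockTriangular
    have hval : ((u⁻¹ : (Matrix (Fin n) (Fin n) R)ˣ) : Matrix (Fin n) (Fin n) R)
        = (u : Matrix (Fin n) (Fin n) R)⁻¹ := by
      simp [Matrix.coe_units_inv]
    constructor
    · intro i
      have h1 : ((u : Matrix (Fin n) (Fin n) R) * (u : Matrix (Fin n) (Fin n) R)⁻¹) i i = 1 := by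
        rw [Matrix.mul_nonsing_inv _ hdet]; simp
      rw [hval]
      rw [hu.diag_mul htri i] at h1
      exact h1
    · intro i j hij
      rw [hval]
      exact htri hij

/-- The underlying matrix of an element of `UT n R`. -/
def UTmat {n : ℕ} {R : Type*} [CommRing R] (X : UT n R) : Matrix (Fin n) (Fin n) R :=
  ((X : (Matrix (Fin n) (Fin n) R)ˣ) : Matrix (Fin n) (Fin n) R)

section Generators

variable {n : ℕ} {R : Type*} [CommRing R]

theorem TU_mul_aux (i j : Fin n) (h : i < j) (x : R) :
    (1 + Matrix.single i j x) * (1 + Matrix.single i j (-x)) = 1 := by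
  have h0 : Matrix.single i j x * Matrix.single i j (-x) = 0 :=
    Matrix.single_mul_single_of_ne x i j i (ne_of_lt h).symm (-x)
  have h1 : Matrix.single i j x + Matrix.single i j (-x) = 0 := by
    rw [← Matrix.single_add]; simp
  calc (1 + Matrix.single i j x) * (1 + Matrix.single i j (-x))
      = 1 + (Matrix.single i j x + Matrix.single i j (-x))
        + Matrix.single i j x * Matrix.single i j (-x) := by noncomm_ring
    _ = 1 := by rw [h1, h0, add_zero, add_zero]

theorem TU_isUnitriangular (i j : Fin n) (h : i < j) (x : R) :
    ((1 + Matrix.single i j x) : Matrix (Fin n) (Fin n) R).IsUnitriangular := by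
  constructor
  · intro k
    rw [Matrix.add_apply, Matrix.one_apply_eq,
      Matrix.single_apply_of_ne i j x k k (by rintro ⟨rfl, rfl⟩; exact lt_irrefl _ h)]
    ring
  · intro k l hkl
    rw [Matrix.add_apply, Matrix.one_apply_ne (ne_of_gt hkl),
      Matrix.single_apply_of_ne i j x k l
        (by rintro ⟨rfl, rfl⟩; exact absurd h (not_lt.mpr hkl.le))]
    ring

/-- The elementary unitriangular matrix `T_{i,j}(x) = I + x·E_{i,j}` as an element of
`UT n R` (with junk value `1` when `¬ i < j`). -/
noncomputable def TU (i j : Fin n) (x : R) : UT n R :=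
  if h : i < j then
    ⟨⟨1 + Matrix.single i j x, 1 + Matrix.single i j (-x),
      TU_mul_aux i j h x, by simpa using TU_mul_aux i j h (-x)⟩, TU_isUnitriangular i j h x⟩
  else 1

/-- `ψ` is the diagonal automorphism `X ↦ D X D⁻¹` associated to a diagonal matrix `D`
with unit diagonal entries. -/
def IsDiagonalAut (ψ : MulAut (UT n R)) : Prop :=
  ∃ d : Fin n → Rˣ, ∀ X : UT n R,
    UTmat (ψ X) = Matrix.diagonal (fun i => (d i : R)) * UTmat X
      * Matrix.diagonal (fun i => (((d i)⁻¹ : Rˣ) : R))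

/-- `Δ` is the ring automorphism of `UT n R` induced entrywise by a ring automorphism of `R`. -/
def IsRingAut (Δ : MulAut (UT n R)) : Prop :=
  ∃ δ : R ≃+* R, ∀ (X : UT n R) (i j : Fin n), UTmat (Δ X) i j = δ (UTmat X i j)

/-- `σ` is the flip automorphism: reflect the matrix across the antidiagonal, then invert. -/
def IsFlipAut (σ : MulAut (UT n R)) : Prop :=
  ∀ X : UT n R, UTmat (σ X) = (Matrix.of fun i j : Fin n => UTmat X j.rev i.rev)⁻¹

/-- `Λ` is a central automorphism: there is an additive endomorphism `λ` of `R` such that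
`Λ(T_{i,i+1}(x)) = T_{i,i+1}(x) · T_{1,n}(λ(x))` on the generators. -/
noncomputable def IsCentralAut (h0 : 0 < n) (Λ : MulAut (UT n R)) : Prop :=
  ∃ lam : R →+ R, ∀ i j : Fin n, (j : ℕ) = (i : ℕ) + 1 → ∀ x : R,
    Λ (TU i j x) = TU i j x * TU ⟨0, h0⟩ ⟨n - 1, Nat.sub_lt h0 Nat.one_pos⟩ (lam x)

end Generators

/-! For a central element `b`, the twisted conjugacy `a = z * b * (φ z)⁻¹` amounts to
`b⁻¹ * a = X⁻¹ * φ X` with `X = z⁻¹`. The central elements of the form `X⁻¹ * φ X` form a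
subgroup `H` of the center `Z`, and `Z ⧸ H` embeds into the set of twisted conjugacy classes, so
`R(φ) < ∞` makes `H` of finite index `N` in `Z`. Every central element of `UT n R` is an
`N`-th power of a central element (`Z ≅ (R, +)` is divisible as `char R = 0`), and `N`-th powers
lie in `H`; hence `H = Z`. -/

section TwistedConjugacy

variable {G : Type*} [Group G] (φ : G ≃* G)

theorem twistedConj_equivalence : Equivalence (TwistedConj φ) where
  refl x := ⟨1, by simp⟩
  symm := by
    rintro x y ⟨z, rfl⟩
    exact ⟨z⁻¹, by simp [mul_assoc]⟩
  trans := by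
    rintro x y w ⟨z, rfl⟩ ⟨v, rfl⟩
    exact ⟨z * v, by simp [mul_assoc]⟩

theorem finite_quot_twistedConj_iff :
    Finite (Quot (TwistedConj φ)) ↔ reidemeisterNumber φ ≠ ⊤ := by
  simp [reidemeisterNumber, Cardinal.aleph0_le_mk_iff]

theorem twistedConj_iff_of_mem_center {a b : G} (hb : b ∈ Subgroup.center G) :
    TwistedConj φ a b ↔ ∃ X, b⁻¹ * a = X⁻¹ * φ X := by
  have hb' := Subgroup.mem_center_iff.mp hb
  constructor
  · rintro ⟨z, rfl⟩
    exact ⟨z⁻¹, by rw [hb' z, map_inv]; group⟩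
  · rintro ⟨X, hX⟩
    refine ⟨X⁻¹, ?_⟩
    rw [map_inv, inv_inv, hb' X⁻¹, mul_assoc, ← hX]
    group

def centralTwistedCommutators : Subgroup (Subgroup.center G) where
  carrier := {z | ∃ X, (z : G) = X⁻¹ * φ X}
  one_mem' := ⟨1, by simp⟩
  mul_mem' := by
    rintro z w ⟨X, hX⟩ ⟨Y, hY⟩
    refine ⟨X * Y, ?_⟩
    have hz := Subgroup.mem_center_iff.mp z.2 Y⁻¹
    calc (z : G) * w = Y⁻¹ * z * φ Y := by rw [hY, hz]; group
      _ = (X * Y)⁻¹ * φ (X * Y) := by rw [hX, map_mul]; group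
  inv_mem' := by
    rintro z ⟨X, hX⟩
    refine ⟨X⁻¹, ?_⟩
    have hz := Subgroup.mem_center_iff.mp (inv_mem z.2) X
    have hφX : φ X = X * z := by rw [hX]; group
    calc ((z⁻¹ : Subgroup.center G) : G) = X * (z : G)⁻¹ * X⁻¹ := by
          rw [hz]; simp
      _ = X⁻¹⁻¹ * φ X⁻¹ := by rw [map_inv, hφX]; group

variable {φ}

theorem mem_centralTwistedCommutators_iff {a b : Subgroup.center G} :
    b⁻¹ * a ∈ centralTwistedCommutators φ ↔ TwistedConj φ a b :=
  (twistedConj_iff_of_mem_center φ b.2).symm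

theorem finite_quotient_centralTwistedCommutators (h : reidemeisterNumber φ ≠ ⊤) :
    Finite (Subgroup.center G ⧸ centralTwistedCommutators φ) := by
  have := (finite_quot_twistedConj_iff φ).mpr h
  let q : Subgroup.center G ⧸ centralTwistedCommutators φ → Quot (TwistedConj φ) :=
    Quotient.lift (fun z => Quot.mk _ (z : G)) fun a b hab =>
      (Quot.sound (mem_centralTwistedCommutators_iff.mp
        (QuotientGroup.leftRel_apply.mp hab))).symm
  refine Finite.of_injective q ?_
  rintro ⟨a⟩ ⟨b⟩ hab
  have hba : TwistedConj φ b a :=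
    (twistedConj_equivalence φ).symm
      ((twistedConj_equivalence φ).eqvGen_iff.mp (Quot.eqvGen_exact hab))
  exact Quotient.sound (QuotientGroup.leftRel_apply.mpr
    (mem_centralTwistedCommutators_iff.mpr hba))

theorem centralTwistedCommutators_eq_top (h : reidemeisterNumber φ ≠ ⊤)
    (hroot : ∀ (z : Subgroup.center G) (N : ℕ), N ≠ 0 → ∃ w, w ^ N = z) :
    centralTwistedCommutators φ = ⊤ := by
  have := finite_quotient_centralTwistedCommutators h
  refine eq_top_iff.mpr fun z _ => ?_
  obtain ⟨w, rfl⟩ :=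
    hroot z _ (Subgroup.index_ne_zero_of_finite (H := centralTwistedCommutators φ))
  exact Subgroup.pow_index_mem _ w

theorem twistedConj_of_mem_center (h : reidemeisterNumber φ ≠ ⊤)
    (hroot : ∀ (z : Subgroup.center G) (N : ℕ), N ≠ 0 → ∃ w, w ^ N = z)
    {a b : G} (ha : a ∈ Subgroup.center G) (hb : b ∈ Subgroup.center G) :
    TwistedConj φ a b := by
  refine (mem_centralTwistedCommutators_iff (a := ⟨a, ha⟩) (b := ⟨b, hb⟩)).mp ?_
  rw [centralTwistedCommutators_eq_top h hroot]
  exact Subgroup.mem_top _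

end TwistedConjugacy

namespace Matrix

variable {ι α : Type*} [Fintype ι] [DecidableEq ι] [Semiring α] {M : Matrix ι ι α} {i j : ι}

theorem col_apply_eq_zero_of_commute_single (h : Commute (single i j (1 : α)) M) {p : ι}
    (hp : p ≠ i) : M p i = 0 := by
  have := congrFun (congrFun h.eq p) j
  rwa [single_mul_apply_of_ne _ _ _ _ _ hp, mul_single_apply_same, mul_one, eq_comm] at this

theorem row_apply_eq_zero_of_commute_single (h : Commute (single i j (1 : α)) M) {q : ι}
    (hq : q ≠ j) : M j q = 0 := by
  have := congrFun (congrFun h.eq i) q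
  rwa [single_mul_apply_same, mul_single_apply_of_ne _ _ _ _ _ hq, one_mul] at this

end Matrix

namespace Matrix.IsUnitriangular

variable {n : ℕ} {R : Type*} [CommRing R] {M : Matrix (Fin n) (Fin n) R} {i j : Fin n}

theorem mul_single_of_forall_le (hM : M.IsUnitriangular) (hi : ∀ p, i ≤ p) (a : R) :
    M * single i j a = single i j a := by
  ext p q
  by_cases hq : q = j
  · subst hq
    rw [mul_single_apply_same]
    rcases eq_or_ne p i with rfl | hp
    · rw [hM.1, one_mul, single_apply_same]
    · rw [hM.2 (lt_of_le_of_ne (hi p) hp.symm), zero_mul, single_apply_of_ne]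
      exact fun h => hp h.1.symm
  · rw [mul_single_apply_of_ne _ _ _ _ _ hq, single_apply_of_ne]
    exact fun h => hq h.2.symm

theorem single_mul_of_forall_le (hM : M.IsUnitriangular) (hj : ∀ q, q ≤ j) (a : R) :
    single i j a * M = single i j a := by
  ext p q
  by_cases hp : p = i
  · subst hp
    rw [single_mul_apply_same]
    rcases eq_or_ne q j with rfl | hq
    · rw [hM.1, mul_one, single_apply_same]
    · rw [hM.2 (lt_of_le_of_ne (hj q) hq), mul_zero, single_apply_of_ne]
      exact fun h => hq h.2.symm
  · rw [single_mul_apply_of_ne _ _ _ _ _ hp, single_apply_of_ne]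
    exact fun h => hp h.1.symm

end Matrix.IsUnitriangular

section ElementaryMatrices

variable {n : ℕ} {R : Type*} [CommRing R]

theorem UTmat_mul (X Y : UT n R) : UTmat (X * Y) = UTmat X * UTmat Y := rfl

theorem UTmat_injective : Function.Injective (UTmat : UT n R → Matrix (Fin n) (Fin n) R) :=
  fun _ _ h => Subtype.ext (Units.ext h)

theorem isUnitriangular_UTmat (X : UT n R) : (UTmat X).IsUnitriangular := X.2

theorem UTmat_TU {i j : Fin n} (h : i < j) (x : R) :
    UTmat (TU i j x) = 1 + Matrix.single i j x := by
  rw [TU, dif_pos h]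
  rfl

theorem TU_zero (i j : Fin n) : TU i j (0 : R) = 1 := by
  by_cases h : i < j
  · exact UTmat_injective (by rw [UTmat_TU h]; simp [UTmat])
  · rw [TU, dif_neg h]

theorem TU_add {i j : Fin n} (h : i < j) (a b : R) : TU i j (a + b) = TU i j a * TU i j b := by
  apply UTmat_injective
  have hsq : Matrix.single i j a * Matrix.single i j b = 0 :=
    Matrix.single_mul_single_of_ne _ _ _ _ h.ne' _
  rw [UTmat_mul, UTmat_TU h, UTmat_TU h, UTmat_TU h, Matrix.single_add, mul_add, add_mul,
    add_mul, hsq]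
  noncomm_ring

theorem TU_nsmul {i j : Fin n} (h : i < j) (N : ℕ) (a : R) : TU i j (N • a) = TU i j a ^ N := by
  induction N with
  | zero => rw [zero_nsmul, TU_zero, pow_zero]
  | succ N ih => rw [succ_nsmul, TU_add h, ih, pow_succ]

theorem commute_single_of_mem_center {A : UT n R} (hA : A ∈ Subgroup.center (UT n R))
    {i j : Fin n} (h : i < j) : Commute (Matrix.single i j (1 : R)) (UTmat A) := by
  have hAT := congrArg UTmat (Subgroup.mem_center_iff.mp hA (TU i j 1))
  rw [UTmat_mul, UTmat_mul, UTmat_TU h, add_mul, mul_add, one_mul, mul_one] at hAT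
  exact add_left_cancel hAT

theorem zero_lt_last (hn : 1 < n) : (⟨0, by omega⟩ : Fin n) < ⟨n - 1, by omega⟩ := by
  rw [Fin.mk_lt_mk]; omega

end ElementaryMatrices

section Center

variable {n : ℕ} {R : Type*} [CommRing R] (hn : 1 < n)

/-- `T_{1,n}(a)`, with 0-based indices. -/
noncomputable def cornerTU (a : R) : UT n R := TU ⟨0, by omega⟩ ⟨n - 1, by omega⟩ a

theorem UTmat_cornerTU (a : R) :
    UTmat (cornerTU hn a) = 1 + Matrix.single ⟨0, by omega⟩ ⟨n - 1, by omega⟩ a :=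
  UTmat_TU (zero_lt_last hn) a

theorem cornerTU_nsmul (N : ℕ) (a : R) : cornerTU hn (N • a) = cornerTU hn a ^ N :=
  TU_nsmul (zero_lt_last hn) N a

theorem cornerTU_mem_center (a : R) : cornerTU hn a ∈ Subgroup.center (UT n R) := by
  refine Subgroup.mem_center_iff.mpr fun g => UTmat_injective ?_
  have hg := isUnitriangular_UTmat g
  rw [UTmat_mul, UTmat_mul, UTmat_cornerTU, mul_add, add_mul, mul_one, one_mul,
    hg.mul_single_of_forall_le (fun p => Fin.mk_le_of_le_val (Nat.zero_le _)),
    hg.single_mul_of_forall_le (fun q => Fin.le_def.mpr (Nat.le_sub_one_of_lt q.isLt))]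

theorem eq_cornerTU_of_mem_center {A : UT n R} (hA : A ∈ Subgroup.center (UT n R)) :
    A = cornerTU hn (UTmat A ⟨0, by omega⟩ ⟨n - 1, by omega⟩) := by
  apply UTmat_injective
  ext p q
  rw [UTmat_cornerTU, Matrix.add_apply, Matrix.single_apply]
  by_cases hpq : p = q
  · subst hpq
    rw [(isUnitriangular_UTmat A).1, Matrix.one_apply_eq, if_neg, add_zero]
    rintro ⟨rfl, h⟩
    exact (zero_lt_last hn).ne h.symm
  rw [Matrix.one_apply_ne hpq, zero_add]
  split_ifs with hcorner
  · obtain ⟨rfl, rfl⟩ := hcorner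
    rfl
  by_cases hq : (q : ℕ) = n - 1
  · have hp : 0 < (p : ℕ) :=
      Nat.pos_of_ne_zero fun hp => hcorner ⟨Fin.ext hp.symm, Fin.ext hq.symm⟩
    exact Matrix.row_apply_eq_zero_of_commute_single
      (commute_single_of_mem_center hA (i := ⟨0, by omega⟩) (Fin.lt_def.mpr hp)) (Ne.symm hpq)
  · exact Matrix.col_apply_eq_zero_of_commute_single
      (commute_single_of_mem_center hA (j := ⟨n - 1, by omega⟩)
        (Fin.lt_def.mpr (lt_of_le_of_ne (Nat.le_sub_one_of_lt q.isLt) hq))) hpq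

end Center

theorem exists_pow_eq_of_mem_center_UT {R : Type*} [Field R] [CharZero R] {n : ℕ} (hn : 1 < n)
    (z : Subgroup.center (UT n R)) (N : ℕ) (hN : N ≠ 0) : ∃ w, w ^ N = z := by
  obtain ⟨a, ha⟩ : ∃ a, (z : UT n R) = cornerTU hn a := ⟨_, eq_cornerTU_of_mem_center hn z.2⟩
  refine ⟨⟨cornerTU hn (a / N), cornerTU_mem_center hn _⟩, Subtype.ext ?_⟩
  rw [Subgroup.coe_pow, ha, ← cornerTU_nsmul, nsmul_eq_mul,
    mul_div_cancel₀ _ (Nat.cast_ne_zero.mpr hN)]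

theorem central_elements_twisted_conj
    {R : Type} [Field R] [CharZero R] {n : ℕ} (hn : 3 ≤ n)
    (φ : MulAut (UT n R))
    (hfin : reidemeisterNumber (φ : (UT n R) ≃* (UT n R)) ≠ ⊤) :
    ∀ A B : UT n R, A ∈ Subgroup.center (UT n R) → B ∈ Subgroup.center (UT n R) →
      ∃ X : UT n R, A = X⁻¹ * B * φ X := by
  intro A B hA hB
  obtain ⟨z, hz⟩ :=
    twistedConj_of_mem_center hfin (exists_pow_eq_of_mem_center_UT (by omega)) hA hB
  exact ⟨z⁻¹, by simpa using hz⟩
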